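/- arXiv:2311.11530 — 4 statements merged into one kernel-verified Lean document; each statement's English description precedes it below -/
import Mathlib

section
/- For all integers n ≥ 1 and all real numbers x, Σ_{i=0}^{n} (-1)^i · C(n,i) · (x - i)^n = n! (Ruiz's identity). -/
/-!
Reversing the order of summation (`i ↦ n - i`) turns the sum into Newton's formula
`Δ^n f (y) = ∑ (-1)^(n-k) C(n,k) f (y + k)` for the `n`-th forward difference of `f r = r ^ n`
at `y = x - n`, and `Δ^n (r ↦ r ^ n)` is the constant `n!`.
-/

open Finset

theorem sum_range_alternating_choose_mul_sub_pow {R : Type*} [CommRing R] (n : ℕ) (x : R) :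
    ∑ i ∈ range (n + 1), (-1 : R) ^ i * (n.choose i : R) * (x - i) ^ n = n.factorial := by
  have h := congr_fun (fwdDiff_iter_eq_factorial (R := R) (n := n)) (x - n)
  rw [fwdDiff_iter_eq_sum_shift, Pi.natCast_apply] at h
  rw [← sum_range_reflect, ← h]
  refine sum_congr rfl fun k hk ↦ ?_
  have hkn : k ≤ n := Nat.lt_succ_iff.mp (mem_range.mp hk)
  rw [add_tsub_cancel_right, Nat.choose_symm hkn, Nat.cast_sub hkn, zsmul_eq_mul, nsmul_eq_mul]
  push_cast
  ring

theorem stmt1_general (n : ℕ) (x : ℝ) :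
    ∑ i ∈ Finset.range (n + 1), (-1 : ℝ) ^ i * (n.choose i : ℝ) * (x - i) ^ n =
      (n.factorial : ℝ) :=
  sum_range_alternating_choose_mul_sub_pow n x

/-- Ruiz's identity: for all integers `n ≥ 1` and all real `x`,
`∑_{i=0}^{n} (-1)^i C(n,i) (x-i)^n = n!`. -/
theorem stmt1 (n : ℕ) (hn : 1 ≤ n) (x : ℝ) :
    ∑ i ∈ Finset.range (n + 1), (-1 : ℝ) ^ i * (n.choose i : ℝ) * (x - i) ^ n =
      (n.factorial : ℝ) :=
  stmt1_general n x
end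

section
/- For every integer k ≥ 2, Σ_{j=0}^{k} (-1)^j · C(2k+2, j) · ((k+1-j)⁴ + (k+1-j)²) = 0. -/
/-!
The `n`-th forward difference of a polynomial of degree `< n` vanishes, so
`∑_{j=0}^{n} (-1)^j C(n,j) P(j - m) = 0` whenever `deg P < n`. For `n = 2m` and an even `P` with
`P(0) = 0`, the terms are symmetric under `j ↦ 2m - j` and the middle one vanishes, so the full
sum is twice the half-sum over `j < m`. Take `P = X⁴ + X²` and `m = k + 1`; `k ≥ 2` gives
`4 < 2m`.
-/

open Finset

open Polynomial in
theorem Polynomial.sum_range_neg_one_pow_mul_choose_mul_eval_eq_zero {R : Type*} [CommRing R]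
    (P : R[X]) {n : ℕ} (hP : P.natDegree < n) (y : R) :
    ∑ j ∈ range (n + 1), (-1 : R) ^ j * n.choose j * P.eval (y + j) = 0 := by
  have h := congr_fun (P.fwdDiff_iter_eq_zero_of_degree_lt hP) y
  rw [fwdDiff_iter_eq_sum_shift] at h
  have hsign (j : ℕ) (hj : j ≤ n) : (-1 : R) ^ j = (-1) ^ n * (-1 : R) ^ (n - j) := by
    rw [← pow_add, show n + (n - j) = j + 2 * (n - j) by omega, pow_add, pow_mul]
    simp
  calc ∑ j ∈ range (n + 1), (-1 : R) ^ j * n.choose j * P.eval (y + j)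
      = (-1) ^ n *
          ∑ j ∈ range (n + 1), ((-1 : ℤ) ^ (n - j) * n.choose j) • P.eval (y + j • 1) := by
        rw [mul_sum]
        refine sum_congr rfl fun j hj => ?_
        rw [hsign j (by simpa [Nat.lt_succ_iff] using hj), zsmul_eq_mul, nsmul_one]
        push_cast
        ring
    _ = 0 := by rw [h, Pi.zero_apply, mul_zero]

theorem sum_range_two_mul_add_one_eq_of_symm {M : Type*} [AddCommMonoid M] (m : ℕ) (g : ℕ → M)
    (hsymm : ∀ j ≤ 2 * m, g (2 * m - j) = g j) (hmid : g m = 0) :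
    ∑ j ∈ range (2 * m + 1), g j = 2 • ∑ j ∈ range m, g j := by
  rw [show 2 * m + 1 = (m + 1) + m by omega, sum_range_add, sum_range_succ, hmid, add_zero, two_nsmul]
  congr 1
  rw [← sum_range_reflect]
  refine sum_congr rfl fun j hj => ?_
  have hj := mem_range.mp hj
  rw [show m + 1 + (m - 1 - j) = 2 * m - j by omega, hsymm j (by omega)]

theorem sum_range_neg_one_pow_mul_choose_mul_of_even {R : Type*} [CommRing R] (m : ℕ)
    (f : R → R) (heven : ∀ x, f (-x) = f x) (hzero : f 0 = 0) :
    ∑ j ∈ range (2 * m + 1), (-1 : R) ^ j * (2 * m).choose j * f (m - j) =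
      2 • ∑ j ∈ range m, (-1 : R) ^ j * (2 * m).choose j * f (m - j) := by
  refine sum_range_two_mul_add_one_eq_of_symm m _ (fun j hj => ?_) (by simp [hzero])
  have hsign : (-1 : R) ^ (2 * m - j) = (-1) ^ j :=
    neg_one_pow_congr (by rw [Nat.even_sub hj]; simp)
  rw [hsign, Nat.choose_symm hj, Nat.cast_sub hj, ← heven]
  push_cast
  ring_nf

/-- For every integer `k ≥ 2`,
`∑_{j=0}^{k} (-1)^j C(2k+2,j) ((k+1-j)⁴ + (k+1-j)²) = 0`. -/
theorem stmt4 (k : ℕ) (hk : 2 ≤ k) :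
    ∑ j ∈ Finset.range (k + 1),
      (-1 : ℤ) ^ j * ((2 * k + 2).choose j : ℤ) *
        (((k : ℤ) + 1 - j) ^ 4 + ((k : ℤ) + 1 - j) ^ 2) = 0 := by
  set f : ℤ → ℤ := fun x => x ^ 4 + x ^ 2
  have hfull : ∑ j ∈ range (2 * (k + 1) + 1),
      (-1 : ℤ) ^ j * (2 * (k + 1)).choose j * f ((k + 1 : ℕ) - j) = 0 := by
    have hdeg : (Polynomial.X ^ 4 + Polynomial.X ^ 2 : Polynomial ℤ).natDegree < 2 * (k + 1) := by
      compute_degree!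
      omega
    refine Eq.trans (sum_congr rfl fun j _ => ?_)
      ((Polynomial.X ^ 4 + Polynomial.X ^ 2).sum_range_neg_one_pow_mul_choose_mul_eval_eq_zero
        hdeg (-(k + 1 : ℕ)))
    simp only [f, Polynomial.eval_add, Polynomial.eval_pow, Polynomial.eval_X]
    ring
  rw [sum_range_neg_one_pow_mul_choose_mul_of_even (k + 1) f (fun x => by simp only [f]; ring)
    (by simp [f])] at hfull
  simpa [f, mul_add] using hfull
end

section
/- For a positive integer j, the polynomial P(a) = C(a,2j)² + C(a-1,2j)², written as a polynomial Q in the variable y = a - j, has degree 4j and all coefficients of odd powers of y equal to zero. -/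
/-!
Write `B(x) = ∏_{i<2j} (x - i) / (2j)!`. Reflecting the roots `0, …, 2j-1` about their centre
gives `B(2j-1-x) = B(x)`, so in the variable `y = a - j` the two squares `B(y+j)²` and
`B(y+j-1)²` are exchanged by `y ↦ -y`: their sum `Q` is even. Its degree is `4j` because the
leading coefficients of the two squares are positive and cannot cancel.
-/

open Finset Polynomial

namespace Polynomial

theorem coeff_eq_zero_of_comp_neg_X_eq_self {R : Type*} [Ring R] [IsAddTorsionFree R]
    {p : R[X]} (hp : p.comp (-X) = p) {m : ℕ} (hm : Odd m) : p.coeff m = 0 := by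
  have h := congrArg (coeff · m) hp
  rw [show (-X : R[X]) = C (-1) * X by simp, comp_C_mul_X_coeff, hm.neg_one_pow, mul_neg_one,
    neg_eq_self] at h
  exact h

theorem prod_range_X_sub_C_comp_reflect {R : Type*} [CommRing R] (n : ℕ) :
    (∏ i ∈ range n, (X - C (i : R))).comp (C ((n : R) - 1) - X) =
      (-1) ^ n * ∏ i ∈ range n, (X - C (i : R)) := by
  have hpow : (-1 : R[X]) ^ n = ∏ _i ∈ range n, (-1) := by simp
  rw [prod_comp, hpow, ← prod_range_reflect (fun i => X - C (i : R)) n, ← prod_mul_distrib]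
  refine prod_congr rfl fun i hi => ?_
  have hi : 1 + i ≤ n := by rw [mem_range] at hi; omega
  have hcast : ((n - 1 - i : ℕ) : R) = n - 1 - i := by
    rw [Nat.sub_sub, Nat.cast_sub hi, Nat.cast_add, Nat.cast_one, sub_add_eq_sub_sub]
  simp only [sub_comp, X_comp, C_comp, hcast, map_sub]
  ring

theorem comp_X_add_C_comp_neg_X_of_comp_reflect {R : Type*} [CommRing R] {f : R[X]} {a b c : R}
    (hf : f.comp (C c - X) = f) (hab : a + b = c) :
    (f.comp (X + C a)).comp (-X) = f.comp (X + C b) := by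
  conv_lhs => rw [← hf]
  simp only [comp_assoc, add_comp, sub_comp, X_comp, C_comp, ← hab, map_add]
  ring_nf

theorem sq_add_sq_comp_neg_X_of_comp_reflect {R : Type*} [CommRing R] {f : R[X]} {a b c : R}
    (hf : f.comp (C c - X) = f) (hab : a + b = c) :
    ((f.comp (X + C a)) ^ 2 + (f.comp (X + C b)) ^ 2).comp (-X) =
      (f.comp (X + C a)) ^ 2 + (f.comp (X + C b)) ^ 2 := by
  rw [add_comp, pow_comp, pow_comp, comp_X_add_C_comp_neg_X_of_comp_reflect hf hab,
    comp_X_add_C_comp_neg_X_of_comp_reflect hf ((add_comm b a).trans hab), add_comm]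

theorem natDegree_sq_add_sq {R : Type*} [Ring R] [LinearOrder R] [IsStrictOrderedRing R]
    {p q : R[X]} (hp : p ≠ 0) (hq : q.natDegree = p.natDegree) :
    (p ^ 2 + q ^ 2).natDegree = 2 * p.natDegree := by
  refine natDegree_eq_of_le_of_coeff_ne_zero ?_ ?_
  · refine natDegree_add_le_of_degree_le natDegree_pow_le ?_
    rw [← hq]
    exact natDegree_pow_le
  · rw [coeff_add, coeff_pow_mul_natDegree, ← hq, coeff_pow_mul_natDegree]
    have hlc : 0 < p.leadingCoeff ^ 2 := sq_pos_of_ne_zero (leadingCoeff_ne_zero.mpr hp)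
    exact (add_pos_of_pos_of_nonneg hlc (sq_nonneg _)).ne'

end Polynomial

theorem stmt8_general (j : ℕ)
    (Cp : Polynomial ℚ)
    (hCp : Cp = Polynomial.C (((2 * j).factorial : ℚ)⁻¹) *
      ∏ i ∈ Finset.range (2 * j), (Polynomial.X - Polynomial.C (i : ℚ)))
    (P : Polynomial ℚ)
    (hP : P = Cp ^ 2 + (Cp.comp (Polynomial.X - 1)) ^ 2)
    (Q : Polynomial ℚ)
    (hQ : Q = P.comp (Polynomial.X + Polynomial.C (j : ℚ))) :
    Q.natDegree = 4 * j ∧ ∀ m : ℕ, Odd m → Q.coeff m = 0 := by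
  have hfac : ((2 * j).factorial : ℚ)⁻¹ ≠ 0 := by positivity
  have hCp_ne : Cp ≠ 0 :=
    hCp ▸ mul_ne_zero (C_ne_zero.mpr hfac) (monic_prod_X_sub_C _ _).ne_zero
  have hCp_deg : Cp.natDegree = 2 * j := by
    rw [hCp, natDegree_C_mul hfac, natDegree_finsetProd_X_sub_C_eq_card, card_range]
  have hCp_symm : Cp.comp (C ((2 * j : ℚ) - 1) - X) = Cp := by
    have h := prod_range_X_sub_C_comp_reflect (R := ℚ) (2 * j)
    push_cast at h
    rw [hCp, mul_comp, C_comp, h, (even_two_mul j).neg_one_pow, one_mul]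
  have hQ_eq : Q = (Cp.comp (X + C (j : ℚ))) ^ 2 + (Cp.comp (X + C ((j : ℚ) - 1))) ^ 2 := by
    have hshift : (X - 1 : ℚ[X]).comp (X + C (j : ℚ)) = X + C ((j : ℚ) - 1) := by
      rw [sub_comp, X_comp, one_comp, map_sub, map_one, add_sub_assoc]
    rw [hQ, hP, add_comp, pow_comp, pow_comp, comp_assoc, hshift]
  have hQ_even : Q.comp (-X) = Q :=
    hQ_eq ▸ sq_add_sq_comp_neg_X_of_comp_reflect hCp_symm (by ring)
  refine ⟨?_, fun _ => coeff_eq_zero_of_comp_neg_X_eq_self hQ_even⟩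
  rw [hQ_eq, natDegree_sq_add_sq (comp_X_add_C_ne_zero_iff.mpr hCp_ne), natDegree_comp,
    natDegree_X_add_C, hCp_deg]
  · ring
  · simp only [natDegree_comp, natDegree_X_add_C]

/-- For a positive integer `j`, the polynomial `P(a) = C(a,2j)² + C(a-1,2j)²`,
written as a polynomial `Q` in the variable `y = a - j`, has degree `4j` and all
coefficients of odd powers of `y` equal to zero. -/
theorem stmt8 (j : ℕ) (hj : 1 ≤ j)
    (Cp : Polynomial ℚ)
    (hCp : Cp = Polynomial.C (((2 * j).factorial : ℚ)⁻¹) *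
      ∏ i ∈ Finset.range (2 * j), (Polynomial.X - Polynomial.C (i : ℚ)))
    (P : Polynomial ℚ)
    (hP : P = Cp ^ 2 + (Cp.comp (Polynomial.X - 1)) ^ 2)
    (Q : Polynomial ℚ)
    (hQ : Q = P.comp (Polynomial.X + Polynomial.C (j : ℚ))) :
    Q.natDegree = 4 * j ∧ ∀ m : ℕ, Odd m → Q.coeff m = 0 :=
  stmt8_general j Cp hCp P hP Q hQ
end

section
/- For integers n ≥ 3 and m ≥ n, 2m/(1 + √(2m - n + 1)) ≥ √n. -/
/-- For integers `n ≥ 3` and `m ≥ n`, `2m/(1 + √(2m - n + 1)) ≥ √n`. -/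
theorem stmt13 (n m : ℕ) (hn : 3 ≤ n) (hm : n ≤ m) :
    Real.sqrt n ≤ 2 * (m : ℝ) / (1 + Real.sqrt (2 * (m : ℝ) - (n : ℝ) + 1)) := by
  have hn' : (3:ℝ) ≤ n := by exact_mod_cast hn
  have hm' : (n:ℝ) ≤ m := by exact_mod_cast hm
  set s := Real.sqrt n with hs
  set t := Real.sqrt (2 * (m:ℝ) - n + 1) with ht
  have ht0 : 0 ≤ t := Real.sqrt_nonneg _
  have hs0 : 0 ≤ s := Real.sqrt_nonneg _
  have hs2 : s ^ 2 = n := Real.sq_sqrt (by linarith)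
  have ht2 : t ^ 2 = 2 * (m:ℝ) - n + 1 := Real.sq_sqrt (by nlinarith)
  have hsm : s ≤ (n:ℝ) - 1/2 := by nlinarith [sq_nonneg (s - 2)]
  rw [le_div_iff₀ (by positivity)]
  nlinarith [sq_nonneg (s - t)]
end
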